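/- Let f(z) = z + β + ∫_ℝ (1+tz)/(t−z) dμ(t) on the upper half-plane H, where μ is a symmetric finite positive Borel measure with ∫_ℝ |t| dμ(t) = ∞ and β ≠ 0. Then for every z₀ ∈ H, the sequence y_n = Im f^n(z₀) tends to +∞. -/

import Mathlib

/-!
Write `P(z) = ∫ (1+t²)/|t−z|² dμ(t)`. Then `Im f(z) = Im z · (1 + P(z))`, so `y_n` increases;
suppose it stays below `L`. Telescoping gives `∑ P(z_n) < ∞`, and since
`P(z) ≥ μ(ℝ)/(2 + 2 (Re z)² + (Im z)²)`, this forces `|x_n| → ∞`.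
From `f(z) − f(w̄) = (z − w̄)(1 + ∫ (1+t²)/((t−z)(t−w̄)) dμ)` and Cauchy–Schwarz,
`f` contracts the pseudo-hyperbolic distance, so the steps `|z_{n+1} − z_n|` are bounded by
some `B`. Hence `x_n` eventually keeps one sign and passes within `B` of every point of a
half-line `J`. On `J`, `∑ₙ (1+t²)/|t−z_n|² ≥ (1+t²)/(B² + L²)`, so
`∫_J |t| dμ ≤ (B² + L²) ∑ P(z_n) < ∞`; but for symmetric `μ`, `∫ |t| dμ = ∞` makes the integral
of `|t|` over every half-line infinite.
-/

open MeasureTheory Filter Complex Topology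

/-- The parabolic self-map of the upper half-plane associated to `β` and `μ`:
`f(z) = z + β + ∫ (1+tz)/(t−z) dμ(t)`. -/
noncomputable def fmap (β : ℝ) (μ : Measure ℝ) (z : ℂ) : ℂ :=
  z + (β : ℂ) + ∫ t : ℝ, (1 + (t : ℂ) * z) / ((t : ℂ) - z) ∂μ

/-- The pseudo-hyperbolic distance on the upper half-plane:
`ρ(z,w) = |z−w|/|z−conj w|`. -/
noncomputable def pseudoHyp (z w : ℂ) : ℝ :=
  ‖z - w‖ / ‖z - (starRingEnd ℂ) w‖

/-- `f` is of zero hyperbolic step: there exists `z` in the upper half-plane with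
`ρ(f^[n+1] z, f^[n] z) → 0`. -/
def ZeroHS (f : ℂ → ℂ) : Prop :=
  ∃ z : ℂ, 0 < z.im ∧
    Tendsto (fun n : ℕ => pseudoHyp (f^[n + 1] z) (f^[n] z)) atTop (𝓝 0)

open Set ComplexConjugate

noncomputable def nevanlinnaKernel (z : ℂ) (t : ℝ) : ℝ :=
  (1 + t ^ 2) / ((t - z.re) ^ 2 + z.im ^ 2)

noncomputable def nevanlinnaIntegral (μ : Measure ℝ) (z : ℂ) : ℝ :=
  ∫ t, nevanlinnaKernel z t ∂μ

noncomputable def crossKernel (z w : ℂ) (t : ℝ) : ℂ :=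
  (1 + (t : ℂ) ^ 2) / ((t - z) * (t - w))

lemma ofReal_sub_ne_zero {z : ℂ} (hz : z.im ≠ 0) (t : ℝ) : (t : ℂ) - z ≠ 0 :=
  fun h => hz (by simpa using congrArg Complex.im h)

lemma normSq_ofReal_sub (z : ℂ) (t : ℝ) : normSq ((t : ℂ) - z) = (t - z.re) ^ 2 + z.im ^ 2 := by
  simp only [normSq_apply, sub_re, ofReal_re, sub_im, ofReal_im, zero_sub, mul_neg, neg_mul,
    neg_neg]
  ring

lemma norm_ofReal_sub_sq (z : ℂ) (t : ℝ) : ‖(t : ℂ) - z‖ ^ 2 = (t - z.re) ^ 2 + z.im ^ 2 := by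
  rw [Complex.sq_norm, normSq_ofReal_sub]

lemma ofReal_sub_mul_ofReal_sub_conj (z : ℂ) (t : ℝ) :
    ((t : ℂ) - z) * ((t : ℂ) - conj z) = ((t - z.re) ^ 2 + z.im ^ 2 : ℝ) := by
  rw [← normSq_ofReal_sub, ← mul_conj, map_sub, conj_ofReal]

lemma nevanlinnaKernel_nonneg (z : ℂ) (t : ℝ) : 0 ≤ nevanlinnaKernel z t := by
  unfold nevanlinnaKernel
  positivity

@[simp]
lemma nevanlinnaKernel_conj (z : ℂ) : nevanlinnaKernel (conj z) = nevanlinnaKernel z := by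
  funext t
  simp [nevanlinnaKernel]

lemma measurable_nevanlinnaKernel (z : ℂ) : Measurable (nevanlinnaKernel z) := by
  unfold nevanlinnaKernel
  fun_prop

lemma nevanlinnaKernel_le {z : ℂ} (hz : z.im ≠ 0) (t : ℝ) :
    nevanlinnaKernel z t ≤ 2 + (1 + 2 * z.re ^ 2) / z.im ^ 2 := by
  have hy : 0 < z.im ^ 2 := by positivity
  have hc : 0 ≤ (1 + 2 * z.re ^ 2) / z.im ^ 2 := by positivity
  have hcy : (1 + 2 * z.re ^ 2) / z.im ^ 2 * z.im ^ 2 = 1 + 2 * z.re ^ 2 :=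
    div_mul_cancel₀ _ hy.ne'
  rw [nevanlinnaKernel, div_le_iff₀ (by positivity)]
  nlinarith [sq_nonneg (t - 2 * z.re), mul_nonneg hc (sq_nonneg (t - z.re))]

lemma one_div_le_nevanlinnaKernel {z : ℂ} (hz : z.im ≠ 0) (t : ℝ) :
    1 / (2 + 2 * z.re ^ 2 + z.im ^ 2) ≤ nevanlinnaKernel z t := by
  rw [nevanlinnaKernel, div_le_div_iff₀ (by positivity) (by positivity)]
  nlinarith [sq_nonneg (t + z.re), mul_nonneg (sq_nonneg t) (sq_nonneg z.re),
    mul_nonneg (sq_nonneg t) (sq_nonneg z.im)]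

lemma div_le_nevanlinnaKernel {z : ℂ} (hz : z.im ≠ 0) {t B L : ℝ} (hB : |t - z.re| ≤ B)
    (hL : |z.im| ≤ L) : (1 + t ^ 2) / (B ^ 2 + L ^ 2) ≤ nevanlinnaKernel z t := by
  apply div_le_div_of_nonneg_left (by positivity) (by positivity)
  rw [← sq_abs (t - z.re), ← sq_abs z.im]
  gcongr

lemma integrable_nevanlinnaKernel (μ : Measure ℝ) [IsFiniteMeasure μ] {z : ℂ} (hz : z.im ≠ 0) :
    Integrable (nevanlinnaKernel z) μ :=
  .of_bound (measurable_nevanlinnaKernel z).aestronglyMeasurable _ <| .of_forall fun t => by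
    rw [Real.norm_of_nonneg (nevanlinnaKernel_nonneg z t)]
    exact nevanlinnaKernel_le hz t

lemma integrable_inv_ofReal_sub (μ : Measure ℝ) [IsFiniteMeasure μ] {z : ℂ} (hz : z.im ≠ 0) :
    Integrable (fun t : ℝ => ((t : ℂ) - z)⁻¹) μ :=
  .of_bound (by fun_prop) _ <| .of_forall fun t => by
    rw [norm_inv]
    exact inv_anti₀ (abs_pos.2 hz) (by simpa using Complex.abs_im_le_norm ((t : ℂ) - z))

lemma integrable_fmap_integrand (μ : Measure ℝ) [IsFiniteMeasure μ] {z : ℂ} (hz : z.im ≠ 0) :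
    Integrable (fun t : ℝ => (1 + (t : ℂ) * z) / ((t : ℂ) - z)) μ := by
  have h : (fun t : ℝ => (1 + (t : ℂ) * z) / ((t : ℂ) - z))
      = fun t : ℝ => z + (1 + z ^ 2) * ((t : ℂ) - z)⁻¹ := by
    funext t
    have := ofReal_sub_ne_zero hz t
    field_simp
    ring
  rw [h]
  exact (integrable_const z).add ((integrable_inv_ofReal_sub μ hz).const_mul _)

lemma nevanlinnaIntegral_nonneg (μ : Measure ℝ) (z : ℂ) : 0 ≤ nevanlinnaIntegral μ z :=
  integral_nonneg (nevanlinnaKernel_nonneg z)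

@[simp]
lemma nevanlinnaIntegral_conj (μ : Measure ℝ) (z : ℂ) :
    nevanlinnaIntegral μ (conj z) = nevanlinnaIntegral μ z := by
  simp [nevanlinnaIntegral]

lemma measureReal_univ_div_le_nevanlinnaIntegral (μ : Measure ℝ) [IsFiniteMeasure μ] {z : ℂ}
    (hz : z.im ≠ 0) : μ.real univ / (2 + 2 * z.re ^ 2 + z.im ^ 2) ≤ nevanlinnaIntegral μ z := by
  calc μ.real univ / (2 + 2 * z.re ^ 2 + z.im ^ 2)
      = ∫ _, 1 / (2 + 2 * z.re ^ 2 + z.im ^ 2) ∂μ := by simp [div_eq_mul_inv]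
    _ ≤ nevanlinnaIntegral μ z :=
      integral_mono (integrable_const _) (integrable_nevanlinnaKernel μ hz)
        (one_div_le_nevanlinnaKernel hz)

lemma fmap_conj (β : ℝ) (μ : Measure ℝ) (w : ℂ) : fmap β μ (conj w) = conj (fmap β μ w) := by
  simp only [fmap, map_add, conj_ofReal, ← integral_conj, map_div₀, map_mul, map_one, map_sub]

lemma fmap_sub_fmap (β : ℝ) (μ : Measure ℝ) [IsFiniteMeasure μ] {z w : ℂ} (hz : z.im ≠ 0)
    (hw : w.im ≠ 0) :
    fmap β μ z - fmap β μ w = (z - w) * (1 + ∫ t, crossKernel z w t ∂μ) := by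
  have hpt (t : ℝ) : (1 + (t : ℂ) * z) / ((t : ℂ) - z) - (1 + (t : ℂ) * w) / ((t : ℂ) - w)
      = (z - w) * crossKernel z w t := by
    have := ofReal_sub_ne_zero hz t
    have := ofReal_sub_ne_zero hw t
    rw [crossKernel]
    field_simp
    ring
  have hint : ∫ t, (z - w) * crossKernel z w t ∂μ
      = (∫ t : ℝ, (1 + (t : ℂ) * z) / ((t : ℂ) - z) ∂μ)
        - ∫ t : ℝ, (1 + (t : ℂ) * w) / ((t : ℂ) - w) ∂μ := by
    simp_rw [← hpt]
    exact integral_sub (integrable_fmap_integrand μ hz) (integrable_fmap_integrand μ hw)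
  rw [mul_add, mul_one, ← integral_const_mul, hint, fmap, fmap]
  ring

lemma integral_crossKernel_conj_self (μ : Measure ℝ) (z : ℂ) :
    ∫ t, crossKernel z (conj z) t ∂μ = nevanlinnaIntegral μ z := by
  rw [nevanlinnaIntegral, ← integral_complex_ofReal]
  congr 1
  funext t
  rw [crossKernel, ofReal_sub_mul_ofReal_sub_conj, nevanlinnaKernel]
  push_cast
  rfl

lemma im_fmap (β : ℝ) (μ : Measure ℝ) [IsFiniteMeasure μ] {z : ℂ} (hz : z.im ≠ 0) :
    (fmap β μ z).im = z.im * (1 + nevanlinnaIntegral μ z) := by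
  have h := congrArg Complex.im
    (fmap_sub_fmap β μ hz (w := conj z) (by simpa using hz))
  simp only [fmap_conj, integral_crossKernel_conj_self, sub_conj, mul_im,
    ofReal_re, ofReal_im, I_re, I_im, add_re, add_im, one_re, one_im] at h
  linarith

lemma sq_le_mul_of_forall_le_am_gm {k a b : ℝ} (ha : 0 < a) (hb : 0 ≤ b) (hk : 0 ≤ k)
    (h : ∀ s > 0, k ≤ (s * a + b / s) / 2) : k ^ 2 ≤ a * b := by
  rcases hk.eq_or_lt with rfl | hk
  · simpa using mul_nonneg ha.le hb
  have := h (k / a) (div_pos hk ha)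
  rw [div_mul_cancel₀ _ ha.ne', div_div_eq_mul_div] at this
  have : k ≤ b * a / k := by linarith
  rw [le_div_iff₀ hk] at this
  nlinarith

lemma norm_crossKernel_le {z w : ℂ} (hz : z.im ≠ 0) (hw : w.im ≠ 0) {s : ℝ} (hs : 0 < s) (t : ℝ) :
    ‖crossKernel z w t‖ ≤ (s * nevanlinnaKernel z t + nevanlinnaKernel w t / s) / 2 := by
  have hu := norm_pos_iff.2 (ofReal_sub_ne_zero hz t)
  have hv := norm_pos_iff.2 (ofReal_sub_ne_zero hw t)
  have h1 : ‖(1 : ℂ) + (t : ℂ) ^ 2‖ = 1 + t ^ 2 := by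
    rw [← ofReal_one, ← ofReal_pow, ← ofReal_add, norm_real, Real.norm_of_nonneg (by positivity)]
  rw [crossKernel, norm_div, norm_mul, h1, nevanlinnaKernel, nevanlinnaKernel,
    ← norm_ofReal_sub_sq, ← norm_ofReal_sub_sq]
  field_simp
  nlinarith [sq_nonneg (s * ‖(t : ℂ) - w‖ - ‖(t : ℂ) - z‖)]

lemma norm_one_add_integral_crossKernel_sq_le (μ : Measure ℝ) [IsFiniteMeasure μ] {z w : ℂ}
    (hz : z.im ≠ 0) (hw : w.im ≠ 0) :
    ‖1 + ∫ t, crossKernel z w t ∂μ‖ ^ 2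
      ≤ (1 + nevanlinnaIntegral μ z) * (1 + nevanlinnaIntegral μ w) := by
  have hA := nevanlinnaIntegral_nonneg μ z
  have hB := nevanlinnaIntegral_nonneg μ w
  -- Cauchy–Schwarz, obtained by integrating the AM–GM bound `norm_crossKernel_le` for each `s > 0`.
  refine sq_le_mul_of_forall_le_am_gm (by linarith) (by linarith) (norm_nonneg _) fun s hs => ?_
  have hint : ‖∫ t, crossKernel z w t ∂μ‖
      ≤ (s * nevanlinnaIntegral μ z + nevanlinnaIntegral μ w / s) / 2 := by
    calc _ ≤ ∫ t, (s * nevanlinnaKernel z t + nevanlinnaKernel w t / s) / 2 ∂μ :=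
          norm_integral_le_of_norm_le ((((integrable_nevanlinnaKernel μ hz).const_mul s).add
            ((integrable_nevanlinnaKernel μ hw).div_const s)).div_const 2)
            (.of_forall (norm_crossKernel_le hz hw hs))
      _ = _ := by
          rw [integral_div, integral_add ((integrable_nevanlinnaKernel μ hz).const_mul s)
            ((integrable_nevanlinnaKernel μ hw).div_const s), integral_const_mul, integral_div]
          rfl
  have hs2 : 2 ≤ s + 1 / s := by
    have : s + 1 / s - 2 = (s - 1) ^ 2 / s := by field_simp; ring
    linarith [show 0 ≤ (s - 1) ^ 2 / s by positivity]
  have hsplit : (s * (1 + nevanlinnaIntegral μ z) + (1 + nevanlinnaIntegral μ w) / s) / 2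
      = (s + 1 / s) / 2 + (s * nevanlinnaIntegral μ z + nevanlinnaIntegral μ w / s) / 2 := by ring
  calc ‖1 + ∫ t, crossKernel z w t ∂μ‖ ≤ 1 + ‖∫ t, crossKernel z w t ∂μ‖ := by
        simpa using norm_add_le (1 : ℂ) (∫ t, crossKernel z w t ∂μ)
    _ ≤ _ := by linarith

lemma pseudoHyp_nonneg (z w : ℂ) : 0 ≤ pseudoHyp z w :=
  div_nonneg (norm_nonneg _) (norm_nonneg _)

lemma normSq_sub_conj (z w : ℂ) : normSq (z - conj w) = normSq (z - w) + 4 * z.im * w.im := by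
  simp only [normSq_apply, sub_re, conj_re, sub_im, conj_im, sub_neg_eq_add]
  ring

lemma normSq_sub_conj_pos {z w : ℂ} (hz : 0 < z.im) (hw : 0 < w.im) : 0 < normSq (z - conj w) := by
  rw [normSq_sub_conj]
  nlinarith [normSq_nonneg (z - w), mul_pos hz hw]

lemma pseudoHyp_sq {z w : ℂ} (hz : 0 < z.im) (hw : 0 < w.im) :
    pseudoHyp z w ^ 2 = 1 - 4 * z.im * w.im / normSq (z - conj w) := by
  have hN := normSq_sub_conj_pos hz hw
  rw [pseudoHyp, div_pow, Complex.sq_norm, Complex.sq_norm]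
  field_simp
  rw [normSq_sub_conj]
  ring

lemma pseudoHyp_lt_one {z w : ℂ} (hz : 0 < z.im) (hw : 0 < w.im) : pseudoHyp z w < 1 := by
  have h : 0 < 4 * z.im * w.im / normSq (z - conj w) := by
    have := normSq_sub_conj_pos hz hw
    positivity
  rw [← pow_lt_one_iff_of_nonneg (pseudoHyp_nonneg z w) two_ne_zero, pseudoHyp_sq hz hw]
  linarith

lemma pseudoHyp_le_pseudoHyp {z w z' w' : ℂ} {a b : ℝ} (hz : 0 < z.im) (hw : 0 < w.im)
    (ha : 0 < a) (hb : 0 < b) (hz' : z'.im = z.im * a) (hw' : w'.im = w.im * b)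
    (h : normSq (z' - conj w') ≤ a * b * normSq (z - conj w)) :
    pseudoHyp z' w' ≤ pseudoHyp z w := by
  have hz'0 : 0 < z'.im := hz' ▸ mul_pos hz ha
  have hw'0 : 0 < w'.im := hw' ▸ mul_pos hw hb
  rw [← pow_le_pow_iff_left₀ (pseudoHyp_nonneg _ _) (pseudoHyp_nonneg _ _) two_ne_zero,
    pseudoHyp_sq hz'0 hw'0, pseudoHyp_sq hz hw, hz', hw', sub_le_sub_iff_left,
    div_le_div_iff₀ (normSq_sub_conj_pos hz hw) (normSq_sub_conj_pos hz'0 hw'0)]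
  have := mul_pos hz hw
  nlinarith

lemma pseudoHyp_fmap_le (β : ℝ) (μ : Measure ℝ) [IsFiniteMeasure μ] {z w : ℂ} (hz : 0 < z.im)
    (hw : 0 < w.im) : pseudoHyp (fmap β μ z) (fmap β μ w) ≤ pseudoHyp z w := by
  have hw' : (conj w).im ≠ 0 := by simpa using hw.ne'
  refine pseudoHyp_le_pseudoHyp hz hw (by linarith [nevanlinnaIntegral_nonneg μ z])
    (by linarith [nevanlinnaIntegral_nonneg μ w]) (im_fmap β μ hz.ne') (im_fmap β μ hw.ne') ?_
  rw [← fmap_conj, fmap_sub_fmap β μ hz.ne' hw', normSq_mul, ← Complex.sq_norm (1 + _), mul_comm]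
  exact mul_le_mul_of_nonneg_right
    (by simpa using norm_one_add_integral_crossKernel_sq_le μ hz.ne' hw') (normSq_nonneg _)

lemma norm_sub_le_of_pseudoHyp_le {u v : ℂ} (hu : 0 < u.im) (hv : 0 < v.im) {r : ℝ} (hr : r < 1)
    (h : pseudoHyp u v ≤ r) : ‖u - v‖ ≤ 2 * r * v.im / (1 - r) := by
  have hd : 0 < ‖u - conj v‖ :=
    norm_pos_iff.2 fun h0 => (normSq_sub_conj_pos hu hv).ne' (by rw [h0, map_zero])
  have h1 : ‖u - v‖ ≤ r * ‖u - conj v‖ := (div_le_iff₀ hd).1 h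
  have h2 : ‖u - conj v‖ ≤ ‖u - v‖ + 2 * v.im :=
    calc ‖u - conj v‖ = ‖(u - v) + (v - conj v)‖ := by ring_nf
      _ ≤ ‖u - v‖ + ‖v - conj v‖ := norm_add_le _ _
      _ = ‖u - v‖ + 2 * v.im := by
        rw [sub_conj, norm_mul, norm_I, mul_one, norm_real, Real.norm_of_nonneg (by positivity)]
  have hr0 : 0 ≤ r := (pseudoHyp_nonneg u v).trans h
  rw [le_div_iff₀ (by linarith)]
  nlinarith

lemma summable_of_mul_one_add {y ε : ℕ → ℝ} {L : ℝ} (hy0 : 0 < y 0) (hmono : Monotone y)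
    (hε : ∀ n, 0 ≤ ε n) (hy : ∀ n, y (n + 1) = y n * (1 + ε n)) (hL : ∀ n, y n ≤ L) :
    Summable ε := by
  refine summable_of_sum_range_le hε (c := L / y 0) fun n => ?_
  have key : y 0 * ∑ k ∈ Finset.range n, ε k ≤ y n - y 0 := by
    induction n with
    | zero => simp
    | succ n ih =>
      rw [Finset.sum_range_succ, mul_add, hy n]
      nlinarith [hmono (Nat.zero_le n), hε n]
  rw [le_div_iff₀ hy0]
  linarith [hL n]

lemma tendsto_atTop_or_atBot_of_tendsto_abs {x : ℕ → ℝ} {B : ℝ}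
    (hB : ∀ n, |x (n + 1) - x n| ≤ B) (h : Tendsto (fun n => |x n|) atTop atTop) :
    Tendsto x atTop atTop ∨ Tendsto x atTop atBot := by
  have hB0 : 0 ≤ B := (abs_nonneg _).trans (hB 0)
  obtain ⟨N, hN⟩ := eventually_atTop.1 (h.eventually_gt_atTop B)
  have hsign : ∀ n ≥ N, (0 < x n ↔ 0 < x N) := by
    intro n hn
    induction n, hn using Nat.le_induction with
    | base => rfl
    | succ n hn ih =>
      rw [← ih]
      have := abs_le.1 (hB n)
      rcases lt_abs.1 (hN n hn) with h1 | h1 <;>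
        rcases lt_abs.1 (hN (n + 1) (by omega)) with h2 | h2
      all_goals constructor <;> intro <;> linarith
  by_cases hpos : 0 < x N
  · refine .inl (h.congr' ?_)
    filter_upwards [eventually_ge_atTop N] with n hn
    exact abs_of_pos ((hsign n hn).2 hpos)
  · refine .inr (tendsto_neg_atTop_iff.1 (h.congr' ?_))
    filter_upwards [eventually_ge_atTop N] with n hn
    refine abs_of_neg ?_
    rcases lt_abs.1 (hN n hn) with h1 | h1
    · exact absurd ((hsign n hn).1 (by linarith)) hpos
    · linarith

lemma exists_abs_sub_le_of_tendsto_atTop {x : ℕ → ℝ} {B : ℝ}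
    (hB : ∀ n, |x (n + 1) - x n| ≤ B) (h : Tendsto x atTop atTop) {t : ℝ} (ht : x 0 ≤ t) :
    ∃ n, |t - x n| ≤ B := by
  have hex : ∃ n, t < x n := (h.eventually_gt_atTop t).exists
  have hm : Nat.find hex ≠ 0 := fun h0 => by
    have := Nat.find_spec hex
    rw [h0] at this
    linarith
  obtain ⟨n, hn⟩ := Nat.exists_eq_succ_of_ne_zero hm
  have h1 : x n ≤ t := not_lt.1 (Nat.find_min hex (by omega))
  have h2 : t < x (n + 1) := by simpa [hn] using Nat.find_spec hex
  refine ⟨n, ?_⟩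
  rw [abs_of_nonneg (by linarith)]
  linarith [le_abs_self (x (n + 1) - x n), hB n]

lemma exists_forall_Ici_or_Iic_abs_sub_le {x : ℕ → ℝ} {B : ℝ}
    (hB : ∀ n, |x (n + 1) - x n| ≤ B) (h : Tendsto (fun n => |x n|) atTop atTop) :
    ∃ T, (∀ t ∈ Ici T, ∃ n, |t - x n| ≤ B) ∨ ∀ t ∈ Iic T, ∃ n, |t - x n| ≤ B := by
  rcases tendsto_atTop_or_atBot_of_tendsto_abs hB h with htop | hbot
  · exact ⟨x 0, .inl fun t ht => exists_abs_sub_le_of_tendsto_atTop hB htop ht⟩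
  · refine ⟨x 0, .inr fun t ht => ?_⟩
    have hB' : ∀ n, |-x (n + 1) - -x n| ≤ B := fun n => by
      rw [neg_sub_neg, abs_sub_comm]
      exact hB n
    obtain ⟨n, hn⟩ := exists_abs_sub_le_of_tendsto_atTop hB' (tendsto_neg_atBot_atTop.comp hbot)
      (neg_le_neg (show t ≤ x 0 from ht))
    refine ⟨n, ?_⟩
    rwa [Function.comp_apply, neg_sub_neg, abs_sub_comm] at hn

lemma isNegInvariant_of_forall_measure_preimage_neg {μ : Measure ℝ}
    (hsym : ∀ A : Set ℝ, MeasurableSet A → μ A = μ ((fun t : ℝ => -t) ⁻¹' A)) :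
    μ.IsNegInvariant :=
  ⟨Measure.ext fun A hA => by rw [Measure.neg, Measure.map_apply measurable_neg hA, ← hsym A hA]⟩

lemma not_integrableOn_Ici_of_isNegInvariant {μ : Measure ℝ} [IsFiniteMeasure μ] [μ.IsNegInvariant]
    (hμ : ¬ Integrable (fun t : ℝ => t) μ) (T : ℝ) :
    ¬ IntegrableOn (fun t : ℝ => t) (Ici T) μ := by
  intro hI
  have hI' : IntegrableOn (fun t : ℝ => t) (Iic (-T)) μ := by
    simpa [Pi.neg_def] using hI.comp_neg.neg
  have hcover : univ ⊆ Iic (-T) ∪ Icc (-T) T ∪ Ici T := by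
    intro t _
    by_cases h1 : t ≤ -T
    · exact .inl (.inl h1)
    by_cases h2 : T ≤ t
    · exact .inr h2
    · exact .inl (.inr ⟨by linarith, by linarith⟩)
  exact hμ (integrableOn_univ.1
    (((hI'.union continuous_id.integrableOn_Icc).union hI).mono_set hcover))

lemma not_integrableOn_Iic_of_isNegInvariant {μ : Measure ℝ} [IsFiniteMeasure μ] [μ.IsNegInvariant]
    (hμ : ¬ Integrable (fun t : ℝ => t) μ) (T : ℝ) :
    ¬ IntegrableOn (fun t : ℝ => t) (Iic T) μ := fun hI =>
  not_integrableOn_Ici_of_isNegInvariant hμ (-T) (by simpa [Pi.neg_def] using hI.comp_neg.neg)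

section Sequences

variable {μ : Measure ℝ} [IsFiniteMeasure μ] {z : ℕ → ℂ} {L : ℝ}

lemma tendsto_abs_re_of_summable_nevanlinnaIntegral (hμ : μ ≠ 0) (hz : ∀ n, 0 < (z n).im)
    (hL : ∀ n, (z n).im ≤ L) (hsum : Summable fun n => nevanlinnaIntegral μ (z n)) :
    Tendsto (fun n => |(z n).re|) atTop atTop := by
  have hm : 0 < μ.real univ :=
    ENNReal.toReal_pos (Measure.measure_univ_ne_zero.2 hμ) (measure_ne_top μ _)
  refine tendsto_atTop.2 fun C => ?_
  have hδ : 0 < μ.real univ / (2 + 2 * C ^ 2 + L ^ 2) := by positivity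
  filter_upwards [hsum.tendsto_atTop_zero.eventually (gt_mem_nhds hδ)] with n hn
  by_contra! hC
  have hre : (z n).re ^ 2 ≤ C ^ 2 := by
    rw [← sq_abs]
    exact pow_le_pow_left₀ (abs_nonneg _) hC.le 2
  have him : (z n).im ^ 2 ≤ L ^ 2 := pow_le_pow_left₀ (hz n).le (hL n) 2
  have : μ.real univ / (2 + 2 * C ^ 2 + L ^ 2)
      ≤ μ.real univ / (2 + 2 * (z n).re ^ 2 + (z n).im ^ 2) :=
    div_le_div_of_nonneg_left hm.le (by positivity) (by linarith)
  linarith [measureReal_univ_div_le_nevanlinnaIntegral μ (hz n).ne']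

lemma integrableOn_of_forall_abs_sub_re_le (hz : ∀ n, 0 < (z n).im) (hL : ∀ n, (z n).im ≤ L)
    (hsum : Summable fun n => nevanlinnaIntegral μ (z n)) {S : Set ℝ} (hS : MeasurableSet S)
    {B : ℝ} (hcov : ∀ t ∈ S, ∃ n, |t - (z n).re| ≤ B) :
    IntegrableOn (fun t : ℝ => t) S μ := by
  have hL0 : 0 < L := (hz 0).trans_le (hL 0)
  have hc : 0 < B ^ 2 + L ^ 2 := by positivity
  have hpt : ∀ t ∈ S, ENNReal.ofReal |t|
      ≤ ENNReal.ofReal (B ^ 2 + L ^ 2) * ∑' n, ENNReal.ofReal (nevanlinnaKernel (z n) t) := by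
    intro t ht
    obtain ⟨n, hn⟩ := hcov t ht
    have hK := div_le_nevanlinnaKernel (hz n).ne' hn ((abs_of_pos (hz n)).trans_le (hL n))
    rw [div_le_iff₀' hc] at hK
    calc ENNReal.ofReal |t| ≤ ENNReal.ofReal ((B ^ 2 + L ^ 2) * nevanlinnaKernel (z n) t) :=
          ENNReal.ofReal_le_ofReal (by nlinarith [sq_nonneg (|t| - 1), sq_abs t])
      _ ≤ _ := by
          rw [ENNReal.ofReal_mul hc.le]
          gcongr
          exact ENNReal.le_tsum n
  have hfin : ∫⁻ t in S, ENNReal.ofReal |t| ∂μ < ⊤ := calc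
    _ ≤ ∫⁻ t in S, ENNReal.ofReal (B ^ 2 + L ^ 2)
          * ∑' n, ENNReal.ofReal (nevanlinnaKernel (z n) t) ∂μ := setLIntegral_mono' hS hpt
    _ ≤ ∫⁻ t, ENNReal.ofReal (B ^ 2 + L ^ 2)
          * ∑' n, ENNReal.ofReal (nevanlinnaKernel (z n) t) ∂μ := setLIntegral_le_lintegral _ _
    _ = ENNReal.ofReal (B ^ 2 + L ^ 2) * ∑' n, ENNReal.ofReal (nevanlinnaIntegral μ (z n)) := by
        rw [lintegral_const_mul' _ _ ENNReal.ofReal_ne_top,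
          lintegral_tsum fun n => (measurable_nevanlinnaKernel _).ennreal_ofReal.aemeasurable]
        congr 1
        refine tsum_congr fun n => ?_
        rw [nevanlinnaIntegral, ofReal_integral_eq_lintegral_ofReal
          (integrable_nevanlinnaKernel μ (hz n).ne') (.of_forall (nevanlinnaKernel_nonneg _))]
    _ < ⊤ := by
        rw [← ENNReal.ofReal_tsum_of_nonneg (fun n => nevanlinnaIntegral_nonneg μ _) hsum,
          ← ENNReal.ofReal_mul hc.le]
        exact ENNReal.ofReal_lt_top
  exact ⟨measurable_id.aestronglyMeasurable,
    by simpa [HasFiniteIntegral, Real.enorm_eq_ofReal_abs] using hfin⟩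

end Sequences

section Orbit

variable {β : ℝ} {μ : Measure ℝ} [IsFiniteMeasure μ] {z₀ : ℂ}

lemma im_iterate_fmap_pos (hz₀ : 0 < z₀.im) (n : ℕ) : 0 < ((fmap β μ)^[n] z₀).im := by
  induction n with
  | zero => exact hz₀
  | succ n ih =>
    rw [Function.iterate_succ_apply', im_fmap β μ ih.ne']
    have := nevanlinnaIntegral_nonneg μ ((fmap β μ)^[n] z₀)
    positivity

lemma im_iterate_fmap_succ (hz₀ : 0 < z₀.im) (n : ℕ) :
    ((fmap β μ)^[n + 1] z₀).im
      = ((fmap β μ)^[n] z₀).im * (1 + nevanlinnaIntegral μ ((fmap β μ)^[n] z₀)) := by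
  rw [Function.iterate_succ_apply', im_fmap β μ (im_iterate_fmap_pos hz₀ n).ne']

lemma monotone_im_iterate_fmap (hz₀ : 0 < z₀.im) :
    Monotone fun n => ((fmap β μ)^[n] z₀).im :=
  monotone_nat_of_le_succ fun n => by
    rw [im_iterate_fmap_succ hz₀ n]
    have := im_iterate_fmap_pos (β := β) (μ := μ) hz₀ n
    nlinarith [nevanlinnaIntegral_nonneg μ ((fmap β μ)^[n] z₀)]

lemma exists_abs_re_iterate_fmap_sub_le (hz₀ : 0 < z₀.im) {L : ℝ}
    (hL : ∀ n, ((fmap β μ)^[n] z₀).im ≤ L) :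
    ∃ B, ∀ n, |((fmap β μ)^[n + 1] z₀).re - ((fmap β μ)^[n] z₀).re| ≤ B := by
  have hpos := im_iterate_fmap_pos (β := β) (μ := μ) hz₀
  obtain ⟨r, hr_def⟩ : ∃ r, r = pseudoHyp (fmap β μ z₀) z₀ := ⟨_, rfl⟩
  have hr : r < 1 := hr_def ▸ pseudoHyp_lt_one (hpos 1) hz₀
  have hr0 : 0 ≤ r := hr_def ▸ pseudoHyp_nonneg _ _
  have hstep (n : ℕ) : pseudoHyp ((fmap β μ)^[n + 1] z₀) ((fmap β μ)^[n] z₀) ≤ r := by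
    induction n with
    | zero => rw [hr_def, zero_add, Function.iterate_one, Function.iterate_zero_apply]
    | succ n ih =>
      have h := pseudoHyp_fmap_le β μ (hpos (n + 1)) (hpos n)
      rw [← Function.iterate_succ_apply' (fmap β μ) (n + 1),
        ← Function.iterate_succ_apply' (fmap β μ) n] at h
      exact h.trans ih
  refine ⟨2 * r * L / (1 - r), fun n => ?_⟩
  calc _ ≤ ‖(fmap β μ)^[n + 1] z₀ - (fmap β μ)^[n] z₀‖ := by
        simpa using abs_re_le_norm ((fmap β μ)^[n + 1] z₀ - (fmap β μ)^[n] z₀)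
    _ ≤ 2 * r * ((fmap β μ)^[n] z₀).im / (1 - r) :=
        norm_sub_le_of_pseudoHyp_le (hpos _) (hpos _) hr (hstep n)
    _ ≤ _ := by
        gcongr
        exact hL n

end Orbit

theorem stmt_11_general (β : ℝ) (μ : Measure ℝ) [IsFiniteMeasure μ]
    (hsym : ∀ A : Set ℝ, MeasurableSet A → μ A = μ ((fun t : ℝ => -t) ⁻¹' A))
    (hμ : ¬ Integrable (fun t : ℝ => t) μ) :
    ∀ z₀ : ℂ, 0 < z₀.im →
      Tendsto (fun n : ℕ => ((fmap β μ)^[n] z₀).im) atTop atTop := by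
  intro z₀ hz₀
  have := isNegInvariant_of_forall_measure_preimage_neg hsym
  have hμ0 : μ ≠ 0 := by
    rintro rfl
    exact hμ integrable_zero_measure
  rw [(monotone_im_iterate_fmap hz₀).tendsto_atTop_atTop_iff]
  by_contra! ⟨L, hL⟩
  have hL' (n : ℕ) := (hL n).le
  have hpos := im_iterate_fmap_pos (β := β) (μ := μ) hz₀
  have hsum := summable_of_mul_one_add hz₀ (monotone_im_iterate_fmap hz₀)
    (fun n => nevanlinnaIntegral_nonneg μ _) (im_iterate_fmap_succ hz₀) hL'
  obtain ⟨B, hB⟩ := exists_abs_re_iterate_fmap_sub_le hz₀ hL'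
  obtain ⟨T, hT | hT⟩ := exists_forall_Ici_or_Iic_abs_sub_le hB
    (tendsto_abs_re_of_summable_nevanlinnaIntegral hμ0 hpos hL' hsum)
  · exact not_integrableOn_Ici_of_isNegInvariant hμ T
      (integrableOn_of_forall_abs_sub_re_le hpos hL' hsum measurableSet_Ici hT)
  · exact not_integrableOn_Iic_of_isNegInvariant hμ T
      (integrableOn_of_forall_abs_sub_re_le hpos hL' hsum measurableSet_Iic hT)

theorem stmt_11 (β : ℝ) (μ : Measure ℝ) [IsFiniteMeasure μ]
    (hsym : ∀ A : Set ℝ, MeasurableSet A → μ A = μ ((fun t : ℝ => -t) ⁻¹' A))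
    (hμ : ¬ Integrable (fun t : ℝ => t) μ) (hβ : β ≠ 0) :
    ∀ z₀ : ℂ, 0 < z₀.im →
      Tendsto (fun n : ℕ => ((fmap β μ)^[n] z₀).im) atTop atTop :=
  stmt_11_general β μ hsym hμ
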